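/- Let a, b, c be elements of a vertex (super)algebra. Then :(:ab:)c: − :abc: = Σ_{k≥0} (1/(k+1)!) ( :(∂^{k+1}a)(b ∘_k c): + (−1)^{|a||b|} :(∂^{k+1}b)(a ∘_k c): ), where :abc: denotes the right-normalized triple Wick product :a(:bc:):. -/

import Mathlib

/-- Generalized binomial coefficient `C(m, l) = m(m−1)⋯(m−l+1)/l!` for `m ∈ ℤ`. -/
noncomputable def zc (m : ℤ) (l : ℕ) : ℂ :=
  (∏ i ∈ Finset.range l, ((m : ℂ) - (i : ℂ))) / (l.factorial : ℂ)

/-- The Koszul sign `(−1)^{|a||b|}` for parities `i, j ∈ ℤ/2`. -/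
noncomputable def sgn (i j : ZMod 2) : ℂ := (-1 : ℂ) ^ ((i * j).val)

/-- A vertex superalgebra: a `ℤ/2`-graded `ℂ`-vector space with `ℤ`-indexed circle products
`∘_n`, a vacuum vector, a translation operator, satisfying truncation, vacuum, translation,
grading axioms and the Borcherds identity (with Koszul signs). The Wick product is
`:ab: = a ∘_{−1} b`. -/
class VertexSuperAlg (V : Type) [AddCommGroup V] [Module ℂ V] where
  pr : ℤ → V →ₗ[ℂ] V →ₗ[ℂ] V
  vac : V
  T : Module.End ℂ V
  deg : ZMod 2 → Submodule ℂ V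
  grading : ∀ v : V, ∃ v0 ∈ deg 0, ∃ v1 ∈ deg 1, v = v0 + v1
  vac_deg : vac ∈ deg 0
  pr_deg : ∀ (i j : ZMod 2) (n : ℤ) (a b : V), a ∈ deg i → b ∈ deg j → pr n a b ∈ deg (i + j)
  T_deg : ∀ (i : ZMod 2) (a : V), a ∈ deg i → T a ∈ deg i
  trunc : ∀ a b : V, ∃ N : ℕ, ∀ n : ℕ, N ≤ n → pr (n : ℤ) a b = 0
  vac_left : ∀ (n : ℤ) (a : V), pr n vac a = if n = -1 then a else 0
  create : ∀ (a : V) (n : ℤ), 0 ≤ n → pr n a vac = 0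
  create_neg_one : ∀ a : V, pr (-1) a vac = a
  T_def : ∀ a : V, T a = pr (-2) a vac
  T_deriv : ∀ (a b : V) (n : ℤ), pr n (T a) b = (-n : ℂ) • pr (n - 1) a b
  borcherds : ∀ (i j : ZMod 2) (a b c : V), a ∈ deg i → b ∈ deg j → ∀ m n k : ℤ,
    (∑ᶠ l : ℕ, zc m l • pr (m + k - l) (pr (n + l) a b) c)
      = ∑ᶠ l : ℕ, ((-1 : ℂ) ^ l * zc n l) •
          (pr (m + n - l) a (pr (k + l) b c)
            - (sgn i j * (-1 : ℂ) ^ n) • pr (n + k - l) b (pr (m + l) a c))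

open VertexSuperAlg

open Function

/-!
The Borcherds identity at `(m, n, k) = (0, -1, -1)`, where `C(0, l) = δ_{l,0}` and
`C(-1, l) = (-1)^l`, reads
`:(:ab:)c: = Σ_{l ≥ 0} (a ∘_{-1-l} (b ∘_{l-1} c) + (-1)^{|a||b|} b ∘_{-2-l} (a ∘_l c))`.
Its `l = 0` term `a ∘_{-1} (b ∘_{-1} c)` is `:abc:`; the remaining terms of both families are
those of the right-hand side, since `(∂^{k+1} a) ∘_{-1} = (k+1)! · a ∘_{-2-k}`.
-/

lemma zc_zero (l : ℕ) : zc 0 l = if l = 0 then 1 else 0 := by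
  cases l with
  | zero => simp [zc]
  | succ l => simp [zc, Finset.prod_range_succ']

lemma zc_neg_one (l : ℕ) : zc (-1) l = (-1 : ℂ) ^ l := by
  have hfact : (l.factorial : ℂ) ≠ 0 := by exact_mod_cast l.factorial_ne_zero
  have hprod : ∏ i ∈ Finset.range l, ((-1 : ℂ) - i) = (-1) ^ l * l.factorial :=
    calc ∏ i ∈ Finset.range l, ((-1 : ℂ) - i) = ∏ i ∈ Finset.range l, -((i : ℂ) + 1) :=
          Finset.prod_congr rfl fun i _ => by ring
      _ = (-1) ^ l * l.factorial := by
          rw [Finset.prod_neg, Finset.card_range, ← Finset.prod_range_add_one_eq_factorial]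
          push_cast
          rfl
  rw [zc, Int.cast_neg, Int.cast_one, hprod, mul_div_assoc, div_self hfact, mul_one]

lemma Function.HasFiniteSupport.of_comp_add_one {M : Type*} [Zero M] {f : ℕ → M}
    (hf : HasFiniteSupport fun n => f (n + 1)) : HasFiniteSupport f := by
  refine ((hf.image (· + 1)).insert 0).subset fun n hn => ?_
  cases n with
  | zero => exact Set.mem_insert 0 _
  | succ n => exact Set.mem_insert_of_mem 0 ⟨n, hn, rfl⟩

lemma finsum_nat_eq_zero_add {M : Type*} [AddCommMonoid M] {f : ℕ → M}
    (hf : HasFiniteSupport fun n => f (n + 1)) :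
    ∑ᶠ n, f n = f 0 + ∑ᶠ n, f (n + 1) := by
  have hbij : Bijective fun o : Option ℕ => o.elim 0 (· + 1) := by
    refine ⟨by rintro (_ | _) (_ | _) h <;> simp_all, ?_⟩
    rintro (_ | n)
    exacts [⟨none, rfl⟩, ⟨some n, rfl⟩]
  rw [← finsum_comp _ hbij, finsum_option hf]
  rfl

section VertexSuperAlg

variable {V : Type} [AddCommGroup V] [Module ℂ V] [VertexSuperAlg V]

lemma pr_T_pow (a x : V) (m : ℕ) (n : ℤ) :
    pr n ((T ^ m) a) x = (∏ i ∈ Finset.range m, ((-n : ℂ) + i)) • pr (n - m) a x := by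
  induction m generalizing a n with
  | zero => simp
  | succ m ih =>
    rw [pow_succ, Module.End.mul_apply, ih, T_deriv, smul_smul, Finset.prod_range_succ,
      Nat.cast_succ, ← sub_sub]
    congr 1
    push_cast
    ring

lemma pr_neg_one_T_pow (a x : V) (m : ℕ) :
    pr (-1) ((T ^ m) a) x = (m.factorial : ℂ) • pr (-1 - m) a x := by
  rw [pr_T_pow, ← Finset.prod_range_add_one_eq_factorial, Nat.cast_prod]
  push_cast
  simp only [neg_neg, add_comm (1 : ℂ)]

lemma hasFiniteSupport_pr_nat (a b : V) : HasFiniteSupport fun n : ℕ => pr (n : ℤ) a b := by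
  obtain ⟨N, hN⟩ := trunc a b
  refine (Finset.range N).finite_toSet.subset fun n hn => ?_
  by_contra hlt
  exact hn (hN n (by simpa using hlt))

lemma hasFiniteSupport_pr_of_right {α : Type*} (n : α → ℤ) (a : α → V) {x : α → V}
    (hx : HasFiniteSupport x) : HasFiniteSupport fun k => pr (n k) (a k) (x k) :=
  hx.subset fun k hk hxk => hk (by simp only [hxk, map_zero])

lemma pr_neg_one_pr_neg_one_eq_finsum {i j : ZMod 2} {a b : V} (c : V) (ha : a ∈ deg i)
    (hb : b ∈ deg j) :
    pr (-1) (pr (-1) a b) c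
      = ∑ᶠ l : ℕ, (pr (-1 - l) a (pr (l - 1) b c) + sgn i j • pr (-2 - l) b (pr l a c)) := by
  have h := borcherds i j a b c ha hb 0 (-1) (-1)
  rw [finsum_eq_single _ 0 fun l hl => by simp [zc_zero, hl]] at h
  simp only [zc_zero, if_true, one_smul, Nat.cast_zero, zero_add, add_zero, sub_zero, zpow_neg_one,
    inv_neg, inv_one, mul_neg_one, neg_smul, sub_neg_eq_add, smul_add,
    show (-1 : ℤ) + -1 = -2 by norm_num] at h
  rw [h]
  refine finsum_congr fun l => ?_
  rw [zc_neg_one, ← mul_pow, neg_one_mul, neg_neg, one_pow, one_smul, one_smul, neg_add_eq_sub]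

end VertexSuperAlg

/-- Non-associativity of the Wick product: for homogeneous `a, b` of parities `i, j` and any `c`,
`:(:ab:)c: − :abc: = Σ_{k≥0} (1/(k+1)!)(:(∂^{k+1}a)(b ∘_k c): + (−1)^{|a||b|} :(∂^{k+1}b)(a ∘_k c):)`,
where `:abc: = :a(:bc:):` is the right-normalized triple Wick product. -/
theorem wick_product_associator_formula (V : Type) [AddCommGroup V] [Module ℂ V]
    [VertexSuperAlg V] (i j : ZMod 2) (a b c : V)
    (ha : a ∈ deg (V := V) i) (hb : b ∈ deg (V := V) j) :
    pr (-1) (pr (-1) a b) c - pr (-1) a (pr (-1) b c)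
      = ∑ᶠ k : ℕ, (((k + 1).factorial : ℂ))⁻¹ •
          (pr (-1) ((T ^ (k + 1)) a) (pr (k : ℤ) b c)
            + sgn i j • pr (-1) ((T ^ (k + 1)) b) (pr (k : ℤ) a c)) := by
  set A : ℕ → V := fun l => pr (-1 - l) a (pr (l - 1) b c)
  set B : ℕ → V := fun k => sgn i j • pr (-2 - k) b (pr k a c)
  have hidx (k : ℕ) : (-1 : ℤ) - (k + 1) = -2 - k := by ring
  have hshift : (fun k : ℕ => A (k + 1)) = fun k : ℕ => pr (-2 - (k : ℤ)) a (pr k b c) := by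
    simp only [A, Nat.cast_succ, hidx, add_sub_cancel_right]
  have hA : HasFiniteSupport fun k => A (k + 1) :=
    hshift ▸ hasFiniteSupport_pr_of_right _ _ (hasFiniteSupport_pr_nat b c)
  have hB : HasFiniteSupport B :=
    (hasFiniteSupport_pr_of_right _ _ (hasFiniteSupport_pr_nat a c)).subset
      (support_const_smul_subset _ _)
  have hterm (k : ℕ) : (((k + 1).factorial : ℂ))⁻¹ •
      (pr (-1) ((T ^ (k + 1)) a) (pr (k : ℤ) b c)
        + sgn i j • pr (-1) ((T ^ (k + 1)) b) (pr (k : ℤ) a c)) = A (k + 1) + B k := by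
    have hfact : ((k + 1).factorial : ℂ) ≠ 0 := by exact_mod_cast (k + 1).factorial_ne_zero
    rw [pr_neg_one_T_pow, pr_neg_one_T_pow, Nat.cast_succ, hidx, smul_comm (sgn i j), ← smul_add,
      inv_smul_smul₀ hfact]
    exact congr($hshift.symm k + B k)
  rw [pr_neg_one_pr_neg_one_eq_finsum c ha hb, finsum_add_distrib hA.of_comp_add_one hB,
    finsum_nat_eq_zero_add hA, finsum_congr hterm, finsum_add_distrib hA hB]
  simp only [A, CharP.cast_eq_zero, sub_zero, zero_sub]
  abel
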